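/- arXiv:1610.10018 — 2 statements merged into one kernel-verified Lean document; each statement's English description precedes it below -/
import Mathlib

section
/- In oriented Bernoulli percolation on L at parameter p, for all integers k, ℓ ≥ 1 and every integer C ≥ 1, V_p(k, Cℓ) ≥ P_p(E(k,ℓ))^{2C}, where E(k,ℓ) is the event that {0}×[0,ℓ] is connected to {k}×[2ℓ,3ℓ] or to [0,k]×{3ℓ} inside [0,k]×ℤ. -/
open MeasureTheory

namespace OrientedPerc

/-- Vertices of the plane; the lattice `L` consists of those with even coordinate sum. -/
abbrev Vtx := ℤ × ℤ

/-- An oriented edge is given by its base vertex and a direction: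
`true` for the edge to `x + (1,1)`, `false` for the edge to `x + (-1,1)`. -/
abbrev Edge := Vtx × Bool

/-- A percolation configuration: each oriented edge is open (`true`) or closed. -/
abbrev Config := Edge → Bool

/-- The endpoint of an oriented edge. -/
def tip (e : Edge) : Vtx := e.1 + (if e.2 then (1, 1) else (-1, 1))

/-- One open oriented step from `x` to `y`. -/
def Step (ω : Config) (x y : Vtx) : Prop :=
  ∃ b : Bool, ω (x, b) = true ∧ y = tip (x, b)

/-- `x → y`: there is an open oriented path from `x` to `y`. -/
def Conn (ω : Config) (x y : Vtx) : Prop := Relation.ReflTransGen (Step ω) x y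

/-- `x → y` using only vertices in the set `S`. -/
def ConnIn (S : Set Vtx) (ω : Config) (x y : Vtx) : Prop :=
  x ∈ S ∧ Relation.ReflTransGen (fun a b => Step ω a b ∧ b ∈ S) x y

/-- The box `[a,b] × [c,d]` intersected with the lattice `L`. -/
def box (a b c d : ℤ) : Set Vtx :=
  {v | a ≤ v.1 ∧ v.1 ≤ b ∧ c ≤ v.2 ∧ v.2 ≤ d ∧ Even (v.1 + v.2)}

/-- The box `[a,b] × [c,d]` is crossed vertically (bottom to top). -/
def CrossedVert (ω : Config) (a b c d : ℤ) : Prop :=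
  ∃ x y : Vtx, x.2 = c ∧ y.2 = d ∧ ConnIn (box a b c d) ω x y

/-- The box `[a,b] × [c,d]` is crossed from left to right. -/
def CrossedLR (ω : Config) (a b c d : ℤ) : Prop :=
  ∃ x y : Vtx, x.1 = a ∧ y.1 = b ∧ ConnIn (box a b c d) ω x y

/-- `μ` is Bernoulli oriented bond percolation with parameter `p`:
the states of edges are i.i.d., each open with probability `p`. -/
def IsBernoulli (μ : Measure Config) (p : ℝ) : Prop :=
  IsProbabilityMeasure μ ∧ p ∈ Set.Icc (0 : ℝ) 1 ∧
    ∀ (s : Finset Edge) (f : Edge → Bool),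
      (μ {ω | ∀ e ∈ s, ω e = f e}).toReal = ∏ e ∈ s, (if f e then p else 1 - p)

/-- Probability of a vertical crossing of `[0,m] × [0,n]`. -/
noncomputable def V (μ : Measure Config) (m n : ℕ) : ℝ :=
  (μ {ω | CrossedVert ω 0 (m : ℤ) 0 (n : ℤ)}).toReal

/-- Probability of a left-right crossing of `[0,m] × [0,n]`. -/
noncomputable def H (μ : Measure Config) (m n : ℕ) : ℝ :=
  (μ {ω | CrossedLR ω 0 (m : ℤ) 0 (n : ℤ)}).toReal

/-- The event `R_n ≥ t`: some `(y,0)` with `y ≤ 0` even is connected to some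
`(x,n)` with `x ≥ t`. -/
def Rge (ω : Config) (n t : ℤ) : Prop :=
  ∃ x y : ℤ, Even y ∧ y ≤ 0 ∧ t ≤ x ∧ Conn ω (y, 0) (x, n)

/-- The event `0 → ℓ_n`. -/
def ConnToLine (ω : Config) (n : ℤ) : Prop := ∃ x : ℤ, Conn ω (0, 0) (x, n)


/-- The strip `[0,k] × ℤ` intersected with the lattice `L`. -/
def strip (k : ℤ) : Set Vtx := {v | 0 ≤ v.1 ∧ v.1 ≤ k ∧ Even (v.1 + v.2)}

/-- The event `E(k,ℓ)`: `{0} × [0,ℓ]` is connected to `{k} × [2ℓ,3ℓ]` or to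
`[0,k] × {3ℓ}` inside the strip `[0,k] × ℤ`. -/
def Ekl (ω : Config) (k ℓ : ℤ) : Prop :=
  ∃ x y : Vtx, x.1 = 0 ∧ 0 ≤ x.2 ∧ x.2 ≤ ℓ ∧
    ((y.1 = k ∧ 2 * ℓ ≤ y.2 ∧ y.2 ≤ 3 * ℓ) ∨ (y.2 = 3 * ℓ ∧ 0 ≤ y.1 ∧ y.1 ≤ k)) ∧
    ConnIn (strip k) ω x y

/-!
Let `m` be the largest even integer `≤ ℓ` and `s = 2ℓ - m ≥ ℓ`. For `i < C` let `F i` be the event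
that both the translate of `E(k,ℓ)` by `i s - m` and its mirror image in a horizontal line occur.
By invariance of Bernoulli percolation under these maps and the Harris inequality,
`P(F i) ≥ P(E(k,ℓ))²`, and by the Harris inequality again `P(⋂ F i) ≥ P(E(k,ℓ))^(2C)`.

On `F i` the path of the translate, which starts on the left side of the strip `[0,k] × ℤ`, and the
path of the mirror image, which ends there, cross: two paths in the strip cannot swap sides without
meeting. This yields a path in the strip from the left side at height `≤ i s` to the left side at
height in `[(i+1) s, (i+1) s + m]`. Consecutive such paths overlap in height and are glued the same
way, giving a vertical crossing of `[0,k] × [0, C ℓ]`.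

The Harris inequality for events depending on finitely many edges is Mathlib's FKG inequality for
the product weights of the configurations on those edges.
-/

/-! ### Harris inequality for Bernoulli percolation -/

def DeterminedBy (s : Finset Edge) (A : Set Config) : Prop :=
  ∀ ⦃ω ω' : Config⦄, (∀ e ∈ s, ω e = ω' e) → ω ∈ A → ω' ∈ A

def IsLocal (A : Set Config) : Prop := ∃ s : Finset Edge, DeterminedBy s A

def extendClosed (s : Finset Edge) (a : s → Bool) : Config :=
  fun e => if h : e ∈ s then a ⟨e, h⟩ else false

lemma extendClosed_restrict {s : Finset Edge} (ω : Config) :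
    ∀ e ∈ s, extendClosed s (s.restrict ω) e = ω e := by
  intro e he
  simp [extendClosed, he, Finset.restrict]

lemma monotone_extendClosed (s : Finset Edge) : Monotone (extendClosed s) := by
  intro a b hab e
  by_cases he : e ∈ s
  · simpa [extendClosed, he] using hab ⟨e, he⟩
  · simp [extendClosed, he]

lemma DeterminedBy.preimage_restrict {s : Finset Edge} {A : Set Config} (hA : DeterminedBy s A) :
    s.restrict ⁻¹' (extendClosed s ⁻¹' A) = A := by
  ext ω
  constructor
  · exact hA (extendClosed_restrict ω)
  · exact hA fun e he => (extendClosed_restrict ω e he).symm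

lemma DeterminedBy.mono {s t : Finset Edge} {A : Set Config} (hA : DeterminedBy s A)
    (hst : s ⊆ t) : DeterminedBy t A :=
  fun _ _ h => hA fun e he => h e (hst he)

lemma DeterminedBy.inter {s : Finset Edge} {A B : Set Config} (hA : DeterminedBy s A)
    (hB : DeterminedBy s B) : DeterminedBy s (A ∩ B) :=
  fun _ _ h hω => ⟨hA h hω.1, hB h hω.2⟩

lemma IsLocal.measurableSet {A : Set Config} (hA : IsLocal A) : MeasurableSet A := by
  obtain ⟨s, hs⟩ := hA
  rw [← hs.preimage_restrict]
  exact (Set.toFinite _).measurableSet.preimage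
    (Finset.measurable_restrict (X := fun _ : Edge => Bool) s)

lemma IsLocal.inter {A B : Set Config} (hA : IsLocal A) (hB : IsLocal B) : IsLocal (A ∩ B) := by
  classical
  obtain ⟨s, hs⟩ := hA
  obtain ⟨t, ht⟩ := hB
  exact ⟨s ∪ t, (hs.mono Finset.subset_union_left).inter (ht.mono Finset.subset_union_right)⟩

lemma IsLocal.biInter {ι : Type*} (I : Finset ι) {F : ι → Set Config}
    (hF : ∀ i ∈ I, IsLocal (F i)) : IsLocal (⋂ i ∈ I, F i) := by
  classical
  induction I using Finset.induction_on with
  | empty => exact ⟨∅, fun _ _ _ _ => by simp⟩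
  | insert i I _ ih =>
    rw [Finset.set_biInter_insert]
    exact (hF i (I.mem_insert_self i)).inter (ih fun j hj => hF j (Finset.mem_insert_of_mem hj))

lemma IsLocal.preimage_comp {A : Set Config} (hA : IsLocal A) (F : Edge → Edge) :
    IsLocal ((· ∘ F) ⁻¹' A) := by
  classical
  obtain ⟨s, hs⟩ := hA
  exact ⟨s.image F, fun _ _ h => hs fun e he => h (F e) (Finset.mem_image_of_mem F he)⟩

lemma isUpperSet_preimage_comp {A : Set Config} (hA : IsUpperSet A) (F : Edge → Edge) :
    IsUpperSet ((· ∘ F) ⁻¹' A) :=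
  hA.preimage fun _ _ h e => h (F e)

lemma _root_.IsUpperSet.monotone_indicator_one {α : Type*} [Preorder α] {S : Set α}
    (hS : IsUpperSet S) :
    Monotone (S.indicator (1 : α → ℝ)) := by
  intro a b hab
  by_cases ha : a ∈ S
  · simp [ha, hS hab ha]
  · simp only [Set.indicator_of_notMem ha]
    exact Set.indicator_nonneg (fun _ _ => zero_le_one) b

def bernoulliWeight {ι : Type*} [Fintype ι] (p : ℝ) (a : ι → Bool) : ℝ :=
  ∏ i, if a i then p else 1 - p

lemma bernoulliWeight_nonneg {ι : Type*} [Fintype ι] {p : ℝ} (hp : p ∈ Set.Icc (0 : ℝ) 1)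
    (a : ι → Bool) : 0 ≤ bernoulliWeight p a :=
  Finset.prod_nonneg fun i _ => by split <;> linarith [hp.1, hp.2]

lemma bernoulliWeight_mul_bernoulliWeight {ι : Type*} [Fintype ι] (p : ℝ) (a b : ι → Bool) :
    bernoulliWeight p a * bernoulliWeight p b =
      bernoulliWeight p (a ⊓ b) * bernoulliWeight p (a ⊔ b) := by
  simp only [bernoulliWeight, ← Finset.prod_mul_distrib]
  refine Finset.prod_congr rfl fun i _ => ?_
  simp only [Pi.inf_apply, Pi.sup_apply]
  rcases Bool.eq_false_or_eq_true (a i) with ha | ha <;>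
    rcases Bool.eq_false_or_eq_true (b i) with hb | hb <;> simp [ha, hb, mul_comm]

namespace IsBernoulli

variable {μ : Measure Config} {p : ℝ}

lemma measure_restrict_eq (hμ : IsBernoulli μ p) (s : Finset Edge) (a : s → Bool) :
    (μ (s.restrict ⁻¹' ({a} : Set (s → Bool)))).toReal = bernoulliWeight p a := by
  have hset : s.restrict ⁻¹' ({a} : Set (s → Bool)) =
      {ω : Config | ∀ e ∈ s, ω e = extendClosed s a e} := by
    ext ω
    simp only [Set.mem_preimage, Set.mem_singleton_iff, Set.mem_ofPred_eq, funext_iff,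
      Subtype.forall, Finset.restrict, extendClosed]
    exact forall₂_congr fun e he => by rw [dif_pos he]
  rw [hset, hμ.2.2, bernoulliWeight, ← Finset.prod_coe_sort]
  simp [extendClosed]

lemma measure_preimage_restrict (hμ : IsBernoulli μ p) (s : Finset Edge) (S : Set (s → Bool)) :
    (μ (s.restrict ⁻¹' S)).toReal = ∑ a, bernoulliWeight p a * S.indicator 1 a := by
  classical
  have hfib : ∀ a ∈ S.toFinset, MeasurableSet (s.restrict ⁻¹' ({a} : Set (s → Bool))) :=
    fun a _ => Finset.measurable_restrict (X := fun _ : Edge => Bool) s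
      (measurableSet_singleton a)
  have := hμ.1
  calc (μ (s.restrict ⁻¹' S)).toReal
      = ∑ a ∈ S.toFinset, (μ (s.restrict ⁻¹' ({a} : Set (s → Bool)))).toReal := by
        rw [← ENNReal.toReal_sum fun a _ => measure_ne_top μ _,
          sum_measure_preimage_singleton _ hfib, S.coe_toFinset]
    _ = ∑ a, bernoulliWeight p a * S.indicator 1 a := by
        simp only [hμ.measure_restrict_eq, Set.indicator_apply, Pi.one_apply, mul_ite, mul_one,
          mul_zero, Finset.sum_ite, Finset.sum_const_zero, add_zero]
        congr 1
        ext a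
        simp

lemma sum_bernoulliWeight (hμ : IsBernoulli μ p) (s : Finset Edge) :
    ∑ a : s → Bool, bernoulliWeight p a = 1 := by
  have h := hμ.measure_preimage_restrict s Set.univ
  have := hμ.1
  simpa using h.symm

lemma measure_eq_sum (hμ : IsBernoulli μ p) {s : Finset Edge} {A : Set Config}
    (hA : DeterminedBy s A) :
    (μ A).toReal = ∑ a, bernoulliWeight p a * (extendClosed s ⁻¹' A).indicator 1 a := by
  conv_lhs => rw [← hA.preimage_restrict]
  exact hμ.measure_preimage_restrict s _

lemma measure_eq_of_isLocal {ν : Measure Config} (hμ : IsBernoulli μ p) (hν : IsBernoulli ν p)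
    {A : Set Config} (hA : IsLocal A) : (μ A).toReal = (ν A).toReal := by
  obtain ⟨s, hs⟩ := hA
  rw [hμ.measure_eq_sum hs, hν.measure_eq_sum hs]

lemma map_comp (hμ : IsBernoulli μ p) {F : Edge → Edge} (hF : F.Injective) :
    IsBernoulli (μ.map (· ∘ F)) p := by
  have hmeas : Measurable fun ω : Config => ω ∘ F := by fun_prop
  have := hμ.1
  refine ⟨Measure.isProbabilityMeasure_map hmeas.aemeasurable, hμ.2.1, fun s f => ?_⟩
  have hcyl : MeasurableSet {ω : Config | ∀ e ∈ s, ω e = f e} :=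
    IsLocal.measurableSet ⟨s, fun _ _ h hω e he => (h e he).symm.trans (hω e he)⟩
  classical
  have hpre : (· ∘ F) ⁻¹' {ω : Config | ∀ e ∈ s, ω e = f e} =
      {ω | ∀ e ∈ s.image F, ω e = f (F.invFun e)} := by
    ext ω
    simp only [Set.mem_preimage, Set.mem_ofPred_eq, Function.comp_apply, Finset.forall_mem_image,
      Function.leftInverse_invFun hF _]
  rw [Measure.map_apply hmeas hcyl, hpre, hμ.2.2, Finset.prod_image hF.injOn]
  simp [F.leftInverse_invFun hF _]

lemma measure_preimage_comp (hμ : IsBernoulli μ p) {F : Edge → Edge} (hF : F.Injective)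
    {A : Set Config} (hA : IsLocal A) : (μ ((· ∘ F) ⁻¹' A)).toReal = (μ A).toReal := by
  rw [← Measure.map_apply (by fun_prop) hA.measurableSet]
  exact (hμ.map_comp hF).measure_eq_of_isLocal hμ hA

lemma harris (hμ : IsBernoulli μ p) {A B : Set Config} (hA : IsLocal A) (hB : IsLocal B)
    (hA' : IsUpperSet A) (hB' : IsUpperSet B) :
    (μ A).toReal * (μ B).toReal ≤ (μ (A ∩ B)).toReal := by
  classical
  obtain ⟨sA, hsA⟩ := hA
  obtain ⟨sB, hsB⟩ := hB
  have hA₁ := hsA.mono (Finset.subset_union_left (s₂ := sB))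
  have hB₁ := hsB.mono (Finset.subset_union_right (s₁ := sA))
  rw [hμ.measure_eq_sum hA₁, hμ.measure_eq_sum hB₁, hμ.measure_eq_sum (hA₁.inter hB₁),
    Set.preimage_inter, Set.inter_indicator_one]
  have key := fkg _ _ _ (bernoulliWeight_nonneg hμ.2.1)
    (Set.indicator_nonneg fun _ _ => zero_le_one) (Set.indicator_nonneg fun _ _ => zero_le_one)
    (IsUpperSet.monotone_indicator_one (hA'.preimage (monotone_extendClosed (sA ∪ sB))))
    (IsUpperSet.monotone_indicator_one (hB'.preimage (monotone_extendClosed (sA ∪ sB))))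
    fun a b => (bernoulliWeight_mul_bernoulliWeight p a b).le
  rw [hμ.sum_bernoulliWeight, one_mul] at key
  exact key

lemma prod_le_measure_biInter (hμ : IsBernoulli μ p) {ι : Type*} (I : Finset ι)
    {F : ι → Set Config} (hloc : ∀ i ∈ I, IsLocal (F i)) (hup : ∀ i ∈ I, IsUpperSet (F i)) :
    ∏ i ∈ I, (μ (F i)).toReal ≤ (μ (⋂ i ∈ I, F i)).toReal := by
  classical
  induction I using Finset.induction_on with
  | empty =>
    have := hμ.1
    simp
  | insert i I hi ih =>
    have hloc' : ∀ j ∈ I, IsLocal (F j) := fun j hj => hloc j (Finset.mem_insert_of_mem hj)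
    have hup' : ∀ j ∈ I, IsUpperSet (F j) := fun j hj => hup j (Finset.mem_insert_of_mem hj)
    rw [Finset.prod_insert hi, Finset.set_biInter_insert]
    calc (μ (F i)).toReal * ∏ j ∈ I, (μ (F j)).toReal
        ≤ (μ (F i)).toReal * (μ (⋂ j ∈ I, F j)).toReal :=
          mul_le_mul_of_nonneg_left (ih hloc' hup') ENNReal.toReal_nonneg
      _ ≤ (μ (F i ∩ ⋂ j ∈ I, F j)).toReal :=
          hμ.harris (hloc i (I.mem_insert_self i)) (IsLocal.biInter I hloc')
            (hup i (I.mem_insert_self i)) (isUpperSet_iInter₂ hup')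

end IsBernoulli

/-! ### Paths in the strip -/

lemma Step.snd_eq_and_fst_eq {ω : Config} {x y : Vtx} (h : Step ω x y) :
    y.2 = x.2 + 1 ∧ (y.1 = x.1 + 1 ∨ y.1 = x.1 - 1) := by
  obtain ⟨b, -, rfl⟩ := h
  cases b <;> simp [tip, sub_eq_add_neg]

lemma Step.mono {ω ω' : Config} (hle : ω ≤ ω') {x y : Vtx} (h : Step ω x y) : Step ω' x y := by
  obtain ⟨b, hb, rfl⟩ := h
  exact ⟨b, hle (x, b) hb, rfl⟩

lemma ConnIn.mono {S : Set Vtx} {ω ω' : Config} (hle : ω ≤ ω') {x y : Vtx} (h : ConnIn S ω x y) :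
    ConnIn S ω' x y :=
  ⟨h.1, Relation.ReflTransGen.mono (fun _ _ h' => ⟨h'.1.mono hle, h'.2⟩) _ _ h.2⟩

lemma ConnIn.trans {S : Set Vtx} {ω : Config} {x y z : Vtx} (hxy : ConnIn S ω x y)
    (hyz : ConnIn S ω y z) : ConnIn S ω x z :=
  ⟨hxy.1, hxy.2.trans hyz.2⟩

/-- An open path in the strip `[0,k] × ℤ` through the vertices `(f y, y)`, `a ≤ y ≤ e`: every
step of an oriented path goes up by one, so paths can be parametrised by height. -/
def IsStripPath (ω : Config) (k : ℤ) (f : ℤ → ℤ) (a e : ℤ) : Prop :=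
  (∀ y, a ≤ y → y ≤ e → (f y, y) ∈ strip k) ∧
    ∀ y, a ≤ y → y < e → Step ω (f y, y) (f (y + 1), y + 1)

namespace IsStripPath

variable {ω : Config} {k : ℤ} {f g : ℤ → ℤ} {a e : ℤ}

lemma restrict (h : IsStripPath ω k f a e) {a' e' : ℤ} (ha : a ≤ a') (he : e' ≤ e) :
    IsStripPath ω k f a' e' :=
  ⟨fun y h₁ h₂ => h.1 y (ha.trans h₁) (h₂.trans he),
    fun y h₁ h₂ => h.2 y (ha.trans h₁) (h₂.trans_le he)⟩

lemma congr {ω' : Config} (h : IsStripPath ω k f a e)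
    (hω : ∀ y, a ≤ y → y < e → ∀ b, ω ((f y, y), b) = ω' ((f y, y), b)) :
    IsStripPath ω' k f a e := by
  refine ⟨h.1, fun y h₁ h₂ => ?_⟩
  obtain ⟨b, hb, htip⟩ := h.2 y h₁ h₂
  exact ⟨b, hω y h₁ h₂ b ▸ hb, htip⟩

lemma even_of_eq_zero (h : IsStripPath ω k f a e) {y : ℤ} (hay : a ≤ y) (hye : y ≤ e)
    (hy : f y = 0) : Even y := by
  simpa [hy] using (h.1 y hay hye).2.2

lemma connIn (h : IsStripPath ω k f a e) (hae : a ≤ e) {S : Set Vtx}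
    (hS : ∀ y, a ≤ y → y ≤ e → (f y, y) ∈ S) : ConnIn S ω (f a, a) (f e, e) := by
  refine ⟨hS a le_rfl hae, ?_⟩
  induction e, hae using Int.leInduction with
  | base => exact .refl
  | succ e hae ih =>
    exact .tail (ih (h.restrict le_rfl (by omega)) fun y h₁ h₂ => hS y h₁ (by omega))
      ⟨h.2 e hae (by omega), hS (e + 1) (by omega) le_rfl⟩

/-- Two paths in the strip cannot swap sides without meeting: by parity, their horizontal
distance is even and changes by at most two per step. -/
lemma exists_eq_of_le_of_le (hf : IsStripPath ω k f a e) (hg : IsStripPath ω k g a e)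
    (hae : a ≤ e) (ha : f a ≤ g a) (he : g e ≤ f e) : ∃ y, a ≤ y ∧ y ≤ e ∧ f y = g y := by
  by_contra! hne
  suffices ∀ y, a ≤ y → y ≤ e → f y < g y from (this e hae le_rfl).not_ge he
  intro y hay
  induction y, hay using Int.leInduction with
  | base => exact fun _ => (ha.lt_of_ne (hne a le_rfl hae))
  | succ y hay ih =>
    intro hye
    have hlt := ih (by omega)
    obtain ⟨-, hf'⟩ := (hf.2 y hay (by omega)).snd_eq_and_fst_eq
    obtain ⟨-, hg'⟩ := (hg.2 y hay (by omega)).snd_eq_and_fst_eq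
    obtain ⟨u, hu⟩ := (hf.1 y hay (by omega)).2.2
    obtain ⟨v, hv⟩ := (hg.1 y hay (by omega)).2.2
    have := hne (y + 1) (by omega) hye
    simp only at hf' hg'
    omega

lemma connIn_of_eq (hf : IsStripPath ω k f a e) {b d : ℤ} (hg : IsStripPath ω k g b d) {y : ℤ}
    (hay : a ≤ y) (hye : y ≤ e) (hby : b ≤ y) (hyd : y ≤ d) (hfg : f y = g y) :
    ConnIn (strip k) ω (f a, a) (g d, d) := by
  have h₁ := (hf.restrict le_rfl hye).connIn hay fun z h₁ h₂ => hf.1 z h₁ (h₂.trans hye)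
  have h₂ := (hg.restrict hby le_rfl).connIn hyd fun z h₁ h₂ => hg.1 z (hby.trans h₁) h₂
  rw [hfg] at h₁
  exact h₁.trans h₂

end IsStripPath

lemma ConnIn.exists_isStripPath {ω : Config} {k : ℤ} {x y : Vtx} (h : ConnIn (strip k) ω x y) :
    x.2 ≤ y.2 ∧ ∃ f, IsStripPath ω k f x.2 y.2 ∧ f x.2 = x.1 ∧ f y.2 = y.1 := by
  obtain ⟨hx, hxy⟩ := h
  induction hxy with
  | refl =>
    refine ⟨le_rfl, fun _ => x.1, ⟨fun z h₁ h₂ => ?_, fun z h₁ h₂ => by omega⟩, rfl, rfl⟩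
    obtain rfl : z = x.2 := le_antisymm h₂ h₁
    exact hx
  | @tail b c _ hbc ih =>
    obtain ⟨hle, f, hf, hfx, hfb⟩ := ih
    obtain ⟨hstep, hc⟩ := hbc
    have hc2 : c.2 = b.2 + 1 := hstep.snd_eq_and_fst_eq.1
    refine ⟨by omega, fun z => if z = c.2 then c.1 else f z,
      ⟨fun z h₁ h₂ => ?_, fun z h₁ h₂ => ?_⟩, by simp [hfx, show x.2 ≠ c.2 by omega], by simp⟩
    · by_cases hz : z = c.2
      · simpa [hz] using hc
      · simpa [hz] using hf.1 z h₁ (by omega)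
    · by_cases hz : z = b.2
      · subst hz
        simpa [hfb, ← hc2, show b.2 ≠ c.2 by omega] using hstep
      · simpa [show z ≠ c.2 by omega, show z + 1 ≠ c.2 by omega] using hf.2 z h₁ (by omega)

lemma crossedVert_of_connIn_strip {ω : Config} {k a e c d : ℤ}
    (h : ConnIn (strip k) ω (0, a) (0, e)) (hac : a ≤ c) (hcd : c ≤ d) (hde : d ≤ e) :
    CrossedVert ω 0 k c d := by
  obtain ⟨-, f, hf, -, -⟩ := h.exists_isStripPath
  refine ⟨(f c, c), (f d, d), rfl, rfl, (hf.restrict hac hde).connIn hcd fun y h₁ h₂ => ?_⟩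
  obtain ⟨h0, hk, hev⟩ := hf.1 y (hac.trans h₁) (h₂.trans hde)
  exact ⟨h0, hk, h₁, h₂, hev⟩

/-- The second path starts on the left side, hence to the left of the first one, which ends on the
left side, hence to the left of the second one: so they meet. -/
lemma ConnIn.glue_strip {ω : Config} {k a e a' e' : ℤ} (h : ConnIn (strip k) ω (0, a) (0, e))
    (h' : ConnIn (strip k) ω (0, a') (0, e')) (ha : a ≤ a') (ha' : a' ≤ e) (he : e ≤ e') :
    ConnIn (strip k) ω (0, a) (0, e') := by
  obtain ⟨-, f, hf, hfa, hfe⟩ := h.exists_isStripPath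
  obtain ⟨-, g, hg, hga, hge⟩ := h'.exists_isStripPath
  dsimp only at hf hfa hfe hg hga hge
  obtain ⟨y, hy₁, hy₂, hgf⟩ := (hg.restrict le_rfl he).exists_eq_of_le_of_le
    (hf.restrict ha le_rfl) ha' (by rw [hga]; exact (hf.1 a' ha ha').1)
    (by rw [hfe]; exact (hg.1 e ha' he).1)
  simpa [hfa, hge] using hf.connIn_of_eq hg (ha.trans hy₁) hy₂ hy₁ (hy₂.trans he) hgf.symm

lemma ekl_iff_exists_isStripPath {ω : Config} {k ℓ : ℤ} (hℓ : 0 ≤ ℓ) :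
    Ekl ω k ℓ ↔ ∃ f a e, IsStripPath ω k f a e ∧ f a = 0 ∧ 0 ≤ a ∧ a ≤ ℓ ∧
      2 * ℓ ≤ e ∧ e ≤ 3 * ℓ ∧ (f e = k ∨ e = 3 * ℓ) := by
  constructor
  · rintro ⟨x, y, hx, hx0, hxℓ, hy, hxy⟩
    obtain ⟨-, f, hf, hfx, hfy⟩ := hxy.exists_isStripPath
    refine ⟨f, x.2, y.2, hf, hfx.trans hx, hx0, hxℓ, ?_⟩
    rcases hy with ⟨hy, hy₁, hy₂⟩ | ⟨hy, -, -⟩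
    · exact ⟨hy₁, hy₂, .inl (hfy.trans hy)⟩
    · exact ⟨by linarith [hℓ], hy.le, .inr hy⟩
  · rintro ⟨f, a, e, hf, hfa, ha0, haℓ, he₁, he₂, hfe⟩
    obtain ⟨hfe₀, hfek, -⟩ := hf.1 e (by omega) le_rfl
    refine ⟨(f a, a), (f e, e), hfa, ha0, haℓ, ?_, hf.connIn (by omega) hf.1⟩
    rcases hfe with hfe | hfe
    · exact .inl ⟨hfe, he₁, he₂⟩
    · exact .inr ⟨hfe, hfe₀, hfek⟩

lemma isLocal_setOf_Ekl {k ℓ : ℤ} (hℓ : 0 ≤ ℓ) : IsLocal {ω | Ekl ω k ℓ} := by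
  classical
  refine ⟨(Finset.Icc 0 k ×ˢ Finset.Ico 0 (3 * ℓ)) ×ˢ Finset.univ, fun ω ω' hωω' hω => ?_⟩
  simp only [Set.mem_ofPred_eq, ekl_iff_exists_isStripPath hℓ] at hω ⊢
  obtain ⟨f, a, e, hf, hfa, ha0, haℓ, he₁, he₂, hfe⟩ := hω
  refine ⟨f, a, e, hf.congr fun y hay hye b => hωω' _ ?_, hfa, ha0, haℓ, he₁, he₂, hfe⟩
  obtain ⟨h0, hk, -⟩ := hf.1 y hay hye.le
  simp only [Finset.mem_product, Finset.mem_Icc, Finset.mem_Ico, Finset.mem_univ, and_true]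
  omega

lemma isUpperSet_setOf_Ekl {k ℓ : ℤ} : IsUpperSet {ω | Ekl ω k ℓ} := by
  rintro ω ω' hle ⟨x, y, hx, hx0, hxℓ, hy, hxy⟩
  exact ⟨x, y, hx, hx0, hxℓ, hy, hxy.mono hle⟩

def shiftEdge (t : ℤ) (e : Edge) : Edge := (e.1 + (0, t), e.2)

/-- Reflection in the horizontal line at height `M / 2` reverses orientations: the edge from `x`
to `tip x` goes to the edge from the image of `tip x` to the image of `x`. -/
def flipEdge (M : ℤ) (e : Edge) : Edge :=
  ((e.1.1 + if e.2 then 1 else -1, M - e.1.2 - 1), !e.2)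

lemma shiftEdge_injective (t : ℤ) : (shiftEdge t).Injective := by
  rintro ⟨x, b⟩ ⟨y, c⟩ h
  simpa [shiftEdge] using h

lemma flipEdge_involutive (M : ℤ) : (flipEdge M).Involutive := by
  rintro ⟨⟨x, y⟩, b⟩
  cases b <;> simp [flipEdge] <;> omega

lemma Step.of_comp_shiftEdge {ω : Config} {t : ℤ} {x y : Vtx} (h : Step (ω ∘ shiftEdge t) x y) :
    Step ω (x + (0, t)) (y + (0, t)) := by
  obtain ⟨b, hb, rfl⟩ := h
  exact ⟨b, hb, add_right_comm _ _ _⟩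

lemma Step.of_comp_flipEdge {ω : Config} {M : ℤ} {x y : Vtx} (h : Step (ω ∘ flipEdge M) x y) :
    Step ω (y.1, M - y.2) (x.1, M - x.2) := by
  obtain ⟨b, hb, rfl⟩ := h
  have hflip : flipEdge M (x, b) = (((tip (x, b)).1, M - (tip (x, b)).2), !b) := by
    cases b <;> simp [tip, flipEdge] <;> omega
  refine ⟨!b, hflip ▸ hb, ?_⟩
  cases b <;> simp [tip, Prod.ext_iff] <;> omega

namespace IsStripPath

variable {ω : Config} {k : ℤ} {f : ℤ → ℤ} {a e : ℤ}

lemma of_comp_shiftEdge {t : ℤ} (ht : Even t) (h : IsStripPath (ω ∘ shiftEdge t) k f a e) :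
    IsStripPath ω k (fun y => f (y - t)) (a + t) (e + t) := by
  refine ⟨fun y h₁ h₂ => ?_, fun y h₁ h₂ => ?_⟩
  · obtain ⟨h0, hk, hev⟩ := h.1 (y - t) (by omega) (by omega)
    refine ⟨h0, hk, ?_⟩
    dsimp only at hev ⊢
    rw [Int.even_iff] at ht hev ⊢
    omega
  · have := (h.2 (y - t) (by omega) (by omega)).of_comp_shiftEdge
    dsimp only
    rw [show y + 1 - t = y - t + 1 by ring]
    convert this using 1
    · simp
    · simp [Prod.ext_iff]
      ring

lemma of_comp_flipEdge {M : ℤ} (hM : Even M) (h : IsStripPath (ω ∘ flipEdge M) k f a e) :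
    IsStripPath ω k (fun y => f (M - y)) (M - e) (M - a) := by
  refine ⟨fun y h₁ h₂ => ?_, fun y h₁ h₂ => ?_⟩
  · obtain ⟨h0, hk, hev⟩ := h.1 (M - y) (by omega) (by omega)
    refine ⟨h0, hk, ?_⟩
    dsimp only at hev ⊢
    rw [Int.even_iff] at hM hev ⊢
    omega
  · have := (h.2 (M - y - 1) (by omega) (by omega)).of_comp_flipEdge
    dsimp only
    rw [show M - (y + 1) = M - y - 1 by ring]
    convert this using 1
    · simp
    · simp [Prod.ext_iff]
      ring

end IsStripPath

lemma exists_isStripPath_of_Ekl_comp_shiftEdge {ω : Config} {k ℓ t : ℤ} (hℓ : 0 ≤ ℓ)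
    (ht : Even t) (h : Ekl (ω ∘ shiftEdge t) k ℓ) :
    ∃ f a e, IsStripPath ω k f a e ∧ f a = 0 ∧ t ≤ a ∧ a ≤ t + ℓ ∧ t + 2 * ℓ ≤ e ∧
      e ≤ t + 3 * ℓ ∧ (f e = k ∨ e = t + 3 * ℓ) := by
  obtain ⟨f, a, e, hf, hfa, ha0, haℓ, he₁, he₂, hfe⟩ := (ekl_iff_exists_isStripPath hℓ).1 h
  refine ⟨_, a + t, e + t, hf.of_comp_shiftEdge ht, by simpa using hfa, by omega, by omega,
    by omega, by omega, ?_⟩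
  simp only [add_sub_cancel_right]
  omega

lemma exists_isStripPath_of_Ekl_comp_flipEdge {ω : Config} {k ℓ M : ℤ} (hℓ : 0 ≤ ℓ)
    (hM : Even M) (h : Ekl (ω ∘ flipEdge M) k ℓ) :
    ∃ g b d, IsStripPath ω k g b d ∧ g d = 0 ∧ M - ℓ ≤ d ∧ d ≤ M ∧ M - 3 * ℓ ≤ b ∧
      b ≤ M - 2 * ℓ ∧ (g b = k ∨ b = M - 3 * ℓ) := by
  obtain ⟨f, a, e, hf, hfa, ha0, haℓ, he₁, he₂, hfe⟩ := (ekl_iff_exists_isStripPath hℓ).1 h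
  refine ⟨_, M - e, M - a, hf.of_comp_flipEdge hM, by simpa using hfa, by omega, by omega,
    by omega, by omega, ?_⟩
  simp only [sub_sub_cancel]
  omega

/-! ### The events `F i` -/

/-- The event `F` of the paper: `E(k,ℓ)` translated up by `t`, together with its mirror image in
the horizontal line at height `(t + 2ℓ + m) / 2`. -/
def stageEvent (k ℓ m t : ℤ) : Set Config :=
  (· ∘ shiftEdge t) ⁻¹' {ω | Ekl ω k ℓ} ∩ (· ∘ flipEdge (t + 2 * ℓ + m)) ⁻¹' {ω | Ekl ω k ℓ}

lemma isLocal_stageEvent {k ℓ : ℤ} (hℓ : 0 ≤ ℓ) (m t : ℤ) : IsLocal (stageEvent k ℓ m t) :=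
  ((isLocal_setOf_Ekl hℓ).preimage_comp _).inter ((isLocal_setOf_Ekl hℓ).preimage_comp _)

lemma isUpperSet_stageEvent (k ℓ m t : ℤ) : IsUpperSet (stageEvent k ℓ m t) :=
  (isUpperSet_preimage_comp isUpperSet_setOf_Ekl _).inter
    (isUpperSet_preimage_comp isUpperSet_setOf_Ekl _)

lemma IsBernoulli.sq_le_measure_stageEvent {μ : Measure Config} {p : ℝ} (hμ : IsBernoulli μ p)
    {k ℓ : ℤ} (hℓ : 0 ≤ ℓ) (m t : ℤ) :
    (μ {ω | Ekl ω k ℓ}).toReal ^ 2 ≤ (μ (stageEvent k ℓ m t)).toReal := by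
  have hE := isLocal_setOf_Ekl (k := k) hℓ
  rw [sq]
  nth_rewrite 1 [← hμ.measure_preimage_comp (shiftEdge_injective t) hE]
  rw [← hμ.measure_preimage_comp (flipEdge_involutive (t + 2 * ℓ + m)).injective hE]
  exact hμ.harris (hE.preimage_comp _) (hE.preimage_comp _)
    (isUpperSet_preimage_comp isUpperSet_setOf_Ekl _)
    (isUpperSet_preimage_comp isUpperSet_setOf_Ekl _)

/-- The path given by the translate of `E(k,ℓ)` leaves the left side and the one given by its
mirror image returns to it, so they cross. With `m` the largest even integer `≤ ℓ`, parity of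
the endpoints sharpens the bounds `a ≤ t + ℓ` and `t + ℓ + m ≤ e` to those below. -/
lemma exists_connIn_of_mem_stageEvent {ω : Config} {k ℓ m t : ℤ} (hm : Even m) (hm0 : 0 ≤ m)
    (hmℓ : m ≤ ℓ) (hℓm : ℓ ≤ m + 1) (ht : Even t) (hω : ω ∈ stageEvent k ℓ m t) :
    ∃ a e, a ≤ t + m ∧ t + 2 * ℓ ≤ e ∧ e ≤ t + 2 * ℓ + m ∧ ConnIn (strip k) ω (0, a) (0, e) := by
  have hM : Even (t + 2 * ℓ + m) := (ht.add (even_two_mul ℓ)).add hm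
  obtain ⟨f, a, e, hf, hfa, hta, haℓ, he₁, he₂, hfe⟩ :=
    exists_isStripPath_of_Ekl_comp_shiftEdge (by omega) ht hω.1
  obtain ⟨g, b, d, hg, hgd, hd₁, hd₂, hb₁, hb₂, hgb⟩ :=
    exists_isStripPath_of_Ekl_comp_flipEdge (by omega) hM hω.2
  have ha := hf.even_of_eq_zero le_rfl (by omega) hfa
  have hd := hg.even_of_eq_zero (by omega) le_rfl hgd
  rw [Int.even_iff] at ha hd ht hm
  have hlo : f (max a b) ≤ g (max a b) := by
    rcases le_total b a with hba | hab
    · rw [max_eq_left hba, hfa]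
      exact (hg.1 a hba (by omega)).1
    · rw [max_eq_right hab]
      rcases hgb with hgb | hb
      · rw [hgb]
        exact (hf.1 b hab (by omega)).2.1
      · obtain rfl : a = b := by omega
        rw [hfa]
        exact (hg.1 a le_rfl (by omega)).1
  have hhi : g (min e d) ≤ f (min e d) := by
    rcases le_total d e with hde | hed
    · rw [min_eq_right hde, hgd]
      exact (hf.1 d (by omega) hde).1
    · rw [min_eq_left hed]
      rcases hfe with hfe | he
      · rw [hfe]
        exact (hg.1 e (by omega) hed).2.1
      · obtain rfl : e = d := by omega
        rw [hgd]
        exact (hf.1 e (by omega) le_rfl).1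
  obtain ⟨y, hy₁, hy₂, hfg⟩ :=
    (hf.restrict (le_max_left a b) (min_le_left e d)).exists_eq_of_le_of_le
      (hg.restrict (le_max_right a b) (min_le_right e d)) (by omega) hlo hhi
  refine ⟨a, d, by omega, by omega, by omega, ?_⟩
  simpa [hfa, hgd] using hf.connIn_of_eq hg (le_max_left a b |>.trans hy₁)
    (hy₂.trans (min_le_left e d)) (le_max_right a b |>.trans hy₁)
    (hy₂.trans (min_le_right e d)) hfg

lemma exists_connIn_of_stages {ω : Config} {k m s : ℤ} (hk : 0 ≤ k) (hm : 0 ≤ m) (hms : m ≤ s)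
    (n : ℕ) (hstage : ∀ i < n, ∃ a e, a ≤ i * s ∧ (i + 1) * s ≤ e ∧ e ≤ (i + 1) * s + m ∧
      ConnIn (strip k) ω (0, a) (0, e)) :
    ∃ a e, a ≤ 0 ∧ n * s ≤ e ∧ e ≤ n * s + m ∧ ConnIn (strip k) ω (0, a) (0, e) := by
  induction n with
  | zero => exact ⟨0, 0, le_rfl, by simp, by simpa using hm, ⟨⟨le_rfl, hk, Even.zero⟩, .refl⟩⟩
  | succ n ih =>
    obtain ⟨a, e, ha, he₁, he₂, hae⟩ := ih fun i hi => hstage i (by omega)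
    obtain ⟨a', e', ha', he₁', he₂', hae'⟩ := hstage n (by omega)
    push_cast
    rcases le_total a' a with h | h
    · exact ⟨a', e', h.trans ha, he₁', he₂', hae'⟩
    · exact ⟨a, e', ha, he₁', he₂', hae.glue_strip hae' h (ha'.trans he₁) (by linarith)⟩

lemma biInter_stageEvent_subset_crossedVert {ω : Config} {k ℓ m : ℤ} (hk : 0 ≤ k) (hm : Even m)
    (hm0 : 0 ≤ m) (hmℓ : m ≤ ℓ) (hℓm : ℓ ≤ m + 1) (C : ℕ)
    (hω : ω ∈ ⋂ i ∈ Finset.range C, stageEvent k ℓ m (i * (2 * ℓ - m) - m)) :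
    CrossedVert ω 0 k 0 (C * ℓ) := by
  have hs : Even (2 * ℓ - m) := (even_two_mul ℓ).sub hm
  have hstage : ∀ i < C, ∃ a e, a ≤ i * (2 * ℓ - m) ∧ (i + 1) * (2 * ℓ - m) ≤ e ∧
      e ≤ (i + 1) * (2 * ℓ - m) + m ∧ ConnIn (strip k) ω (0, a) (0, e) := by
    intro i hi
    obtain ⟨a, e, ha, he₁, he₂, hae⟩ := exists_connIn_of_mem_stageEvent hm hm0 hmℓ hℓm
      ((hs.mul_left _).sub hm) (Set.mem_iInter₂.1 hω i (Finset.mem_range.2 hi))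
    exact ⟨a, e, by linarith, by linarith, by linarith, hae⟩
  obtain ⟨a, e, ha, he, -, hae⟩ := exists_connIn_of_stages hk hm0 (by omega) C hstage
  exact crossedVert_of_connIn_strip hae ha (mul_nonneg C.cast_nonneg (by omega))
    ((mul_le_mul_of_nonneg_left (by omega) C.cast_nonneg).trans he)

theorem vertical_crossing_from_Ekl_general (μ : Measure Config) (p : ℝ) (hB : IsBernoulli μ p)
    (k ℓ C : ℕ) :
    (μ {ω | Ekl ω (k : ℤ) (ℓ : ℤ)}).toReal ^ (2 * C) ≤ V μ k (C * ℓ) := by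
  have := hB.1
  set m : ℤ := 2 * ((ℓ : ℤ) / 2)
  let F : ℕ → Set Config := fun i => stageEvent k ℓ m (i * (2 * ℓ - m) - m)
  have hcross : ⋂ i ∈ Finset.range C, F i ⊆ {ω | CrossedVert ω 0 k 0 (C * ℓ : ℕ)} :=
    fun ω hω => by
      push_cast
      exact biInter_stageEvent_subset_crossedVert k.cast_nonneg (even_two_mul _) (by omega)
        (by omega) (by omega) C hω
  calc (μ {ω | Ekl ω k ℓ}).toReal ^ (2 * C)
      = ∏ _i ∈ Finset.range C, (μ {ω | Ekl ω k ℓ}).toReal ^ 2 := by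
        rw [Finset.prod_const, Finset.card_range, pow_mul]
    _ ≤ ∏ i ∈ Finset.range C, (μ (F i)).toReal :=
        Finset.prod_le_prod (fun _ _ => by positivity)
          fun i _ => hB.sq_le_measure_stageEvent (by positivity) m _
    _ ≤ (μ (⋂ i ∈ Finset.range C, F i)).toReal :=
        hB.prod_le_measure_biInter _ (fun i _ => isLocal_stageEvent (by positivity) m _)
          fun i _ => isUpperSet_stageEvent k ℓ m _
    _ ≤ V μ k (C * ℓ) := ENNReal.toReal_mono (measure_ne_top _ _) (measure_mono hcross)

/-- `V_p(k, Cℓ) ≥ P_p(E(k,ℓ))^(2C)`. -/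
theorem vertical_crossing_from_Ekl (μ : Measure Config) (p : ℝ) (hB : IsBernoulli μ p)
    (k ℓ C : ℕ) (hk : 1 ≤ k) (hℓ : 1 ≤ ℓ) (hC : 1 ≤ C) :
    (μ {ω | Ekl ω (k : ℤ) (ℓ : ℤ)}).toReal ^ (2 * C) ≤ V μ k (C * ℓ) :=
  vertical_crossing_from_Ekl_general μ p hB k ℓ C

end OrientedPerc
end

section
/- In critical oriented Bernoulli percolation on L, there exists a constant c > 0 such that for all n ≥ 1, P(0 → ℓ_n) ≥ c/√(w_n), where w_n is any integer satisfying the box-crossing lower bound V(w_n, 2n) ≥ c₀ for a universal constant c₀ > 0. -/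
/-! A vertical crossing of `[0,w] × [0,2n]` passes through some `(x,n)` with `0 ≤ x ≤ w`. Reaching
`(x,n)` from `ℓ₀` and reaching `ℓ_{2n}` from `(x,n)` are events of the edges below and above `ℓ_n`
respectively, hence independent, and by a point reflection through `(x,n)`, respectively a
translation by `(x,n)`, each has probability `P(0 → ℓ_n)`. A union bound over `x` gives
`c₀ ≤ V(w,2n) ≤ (w+1) P(0 → ℓ_n)² ≤ 2w P(0 → ℓ_n)²`. -/

open MeasureTheory

namespace OrientedPerc

open ProbabilityTheory Relation

lemma tip_snd (e : Edge) : (tip e).2 = e.1.2 + 1 := by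
  rcases e with ⟨v, _ | _⟩ <;> simp [tip]

lemma Step.snd_eq {ω : Config} {x y : Vtx} (h : Step ω x y) : y.2 = x.2 + 1 := by
  obtain ⟨b, -, rfl⟩ := h
  exact tip_snd (x, b)

lemma Conn.snd_le {ω : Config} {x y : Vtx} (h : Conn ω x y) : x.2 ≤ y.2 := by
  induction h with
  | refl => rfl
  | tail _ hstep ih => have := hstep.snd_eq; omega

lemma conn_iff_eq_of_snd_le {ω : Config} {x y : Vtx} (h : y.2 ≤ x.2) : Conn ω x y ↔ x = y := by
  refine ⟨fun hxy => ?_, fun hxy => hxy ▸ ReflTransGen.refl⟩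
  rcases ReflTransGen.cases_head_iff.1 hxy with hxy | ⟨z, hxz, hzy⟩
  · exact hxy
  · have := hxz.snd_eq; have := Conn.snd_le hzy; omega

lemma ConnIn.conn {S : Set Vtx} {ω : Config} {x y : Vtx} (h : ConnIn S ω x y) : Conn ω x y :=
  ReflTransGen.mono (fun a b (hab : Step ω a b ∧ b ∈ S) => hab.1) x y h.2

lemma ConnIn.mem {S : Set Vtx} {ω : Config} {x y : Vtx} (h : ConnIn S ω x y) : y ∈ S := by
  obtain ⟨hx, hxy⟩ := h
  induction hxy with
  | refl => exact hx
  | tail _ hstep _ => exact hstep.2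

lemma exists_reflTransGen_through_level {α : Type*} {r : α → α → Prop} (h : α → ℤ)
    (hr : ∀ a b, r a b → h b = h a + 1) {a b : α} (hab : ReflTransGen r a b) {k : ℤ}
    (hak : h a ≤ k) (hkb : k ≤ h b) : ∃ m, h m = k ∧ ReflTransGen r a m ∧ ReflTransGen r m b := by
  induction hab with
  | refl => exact ⟨a, by omega, .refl, .refl⟩
  | @tail c b hac hcb ih =>
    by_cases hkc : k ≤ h c
    · obtain ⟨m, hm, ham, hmc⟩ := ih hkc
      exact ⟨m, hm, ham, hmc.tail hcb⟩
    · exact ⟨b, by have := hr c b hcb; omega, hac.tail hcb, .refl⟩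

lemma CrossedVert.exists_pivot {ω : Config} {w n : ℤ} (hn : 0 ≤ n)
    (h : CrossedVert ω 0 w 0 (n + n)) :
    ∃ x ∈ Finset.Icc 0 w, (∃ y, Conn ω (y, 0) (x, n)) ∧ ∃ z, Conn ω (x, n) (z, n + n) := by
  obtain ⟨⟨a, _⟩, ⟨b, _⟩, rfl, rfl, hS, hab⟩ := h
  obtain ⟨⟨x, m⟩, hm, ham, hmb⟩ := exists_reflTransGen_through_level Prod.snd
    (fun _ _ hstep => hstep.1.snd_eq) hab (k := n) (by simpa using hn) (by simp; omega)
  rw [show m = n from hm] at ham hmb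
  have hmS : (x, n) ∈ box 0 w 0 (n + n) := ConnIn.mem ⟨hS, ham⟩
  exact ⟨x, Finset.mem_Icc.2 ⟨hmS.1, hmS.2.1⟩, ⟨a, ConnIn.conn ⟨hS, ham⟩⟩,
    ⟨b, ConnIn.conn ⟨hmS, hmb⟩⟩⟩

lemma reflTransGen_onFun_equiv {α β : Type*} {r : β → β → Prop} (g : α ≃ β) {a b : α} :
    ReflTransGen (Function.onFun r g) a b ↔ ReflTransGen r (g a) (g b) := by
  refine ⟨fun h => ReflTransGen.lift g (fun _ _ => id) _ _ h, fun h => ?_⟩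
  simpa [Function.onFun] using
    ReflTransGen.lift g.symm (p := Function.onFun r g) (fun _ _ => by simp [Function.onFun]) _ _ h

def translate (t : Vtx) : Edge ≃ Edge := (Equiv.addRight t).prodCongr (Equiv.refl Bool)

lemma step_comp_translate (ω : Config) (t : Vtx) :
    Step (ω ∘ translate t) = Function.onFun (Step ω) (Equiv.addRight t) := by
  ext a b
  simp [Step, translate, Function.onFun, tip, add_right_comm _ t]

lemma conn_comp_translate {ω : Config} {t a b : Vtx} :
    Conn (ω ∘ translate t) a b ↔ Conn ω (a + t) (b + t) := by
  rw [Conn, step_comp_translate]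
  exact reflTransGen_onFun_equiv _

lemma tip_reflect (c v : Vtx) (d : Bool) : tip (c - tip (v, d), d) = c - v := by
  cases d <;> simp only [tip] <;> abel

-- The point reflection `v ↦ c - v` sends the edge `v → tip (v, d)` to the reversed edge
-- `c - tip (v, d) → c - v`.
def reflect (c : Vtx) : Edge ≃ Edge :=
  Function.Involutive.toPerm (fun e => (c - tip e, e.2)) fun ⟨v, d⟩ => by
    simp only [tip_reflect, sub_sub_cancel]

lemma step_comp_reflect (ω : Config) (c : Vtx) :
    Step (ω ∘ reflect c) = Function.onFun (Function.swap (Step ω)) (Equiv.subLeft c) := by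
  ext a b
  simp only [Step, Function.onFun, Function.swap, Function.comp_apply, reflect,
    Equiv.subLeft_apply]
  refine exists_congr fun d => ⟨?_, ?_⟩
  · rintro ⟨hd, rfl⟩
    exact ⟨hd, (tip_reflect c a d).symm⟩
  · rintro ⟨hd, hb⟩
    have ha : a = c - tip (c - b, d) := by rw [← hb, sub_sub_cancel]
    have hb' : b = tip (a, d) := by rw [ha, tip_reflect, sub_sub_cancel]
    refine ⟨?_, hb'⟩
    show ω (c - tip (a, d), d) = true
    rwa [← hb']

lemma conn_comp_reflect {ω : Config} {c a b : Vtx} :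
    Conn (ω ∘ reflect c) a b ↔ Conn ω (c - b) (c - a) := by
  rw [Conn, step_comp_reflect, reflTransGen_onFun_equiv, reflTransGen_swap]
  rfl

section Cylinders

variable {ι : Type*}

def pointCylinders (ι : Type*) : Set (Set (ι → Bool)) :=
  {S | ∃ (s : Finset ι) (f : ι → Bool), S = {ω | ∀ i ∈ s, ω i = f i}}

lemma measurableSet_pointCylinder (s : Finset ι) (f : ι → Bool) :
    MeasurableSet {ω : ι → Bool | ∀ i ∈ s, ω i = f i} :=
  MeasurableSet.pi s.countable_toSet fun i _ => measurableSet_singleton (f i)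

lemma isPiSystem_pointCylinders : IsPiSystem (pointCylinders ι) := by
  classical
  rintro _ ⟨s, f, rfl⟩ _ ⟨t, g, rfl⟩ ⟨ω₀, hf, hg⟩
  refine ⟨s ∪ t, ω₀, ?_⟩
  ext ω
  simp only [Set.mem_inter_iff, Finset.mem_union, or_imp, forall_and]
  constructor
  · rintro ⟨h₁, h₂⟩
    exact ⟨fun i hi => (h₁ i hi).trans (hf i hi).symm, fun i hi => (h₂ i hi).trans (hg i hi).symm⟩
  · rintro ⟨h₁, h₂⟩
    exact ⟨fun i hi => (h₁ i hi).trans (hf i hi), fun i hi => (h₂ i hi).trans (hg i hi)⟩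

lemma generateFrom_pointCylinders :
    MeasurableSpace.generateFrom (pointCylinders ι) = MeasurableSpace.pi := by
  refine le_antisymm (MeasurableSpace.generateFrom_le ?_) (iSup_le fun i => ?_)
  · rintro _ ⟨s, f, rfl⟩
    exact measurableSet_pointCylinder s f
  · refine (@measurable_to_countable' Bool _ _ _ (.generateFrom _) _ fun b => ?_).comap_le
    refine MeasurableSpace.measurableSet_generateFrom ⟨{i}, fun _ => b, ?_⟩
    ext ω
    simp

lemma ext_of_pointCylinders {μ ν : Measure (ι → Bool)} [IsFiniteMeasure μ]
    (h : ∀ (s : Finset ι) (f : ι → Bool),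
      μ {ω | ∀ i ∈ s, ω i = f i} = ν {ω | ∀ i ∈ s, ω i = f i}) : μ = ν := by
  refine ext_of_generate_finite _ generateFrom_pointCylinders.symm isPiSystem_pointCylinders
    (by rintro _ ⟨s, f, rfl⟩; exact h s f) ?_
  simpa using h ∅ fun _ => true

end Cylinders

abbrev edgeSigma (E : Set Edge) : MeasurableSpace Config :=
  ⨆ e ∈ E, MeasurableSpace.comap (fun ω : Config => ω e) inferInstance

lemma edgeSigma_mono {E F : Set Edge} (h : E ⊆ F) : edgeSigma E ≤ edgeSigma F :=
  biSup_mono h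

lemma edgeSigma_le (E : Set Edge) : edgeSigma E ≤ MeasurableSpace.pi :=
  iSup₂_le fun e _ => (measurable_pi_apply e).comap_le

lemma measurableSet_edgeSigma_open {E : Set Edge} {e : Edge} (he : e ∈ E) :
    MeasurableSet[edgeSigma E] {ω | ω e = true} :=
  le_iSup₂ (f := fun e (_ : e ∈ E) => MeasurableSpace.comap (fun ω : Config => ω e) inferInstance)
    e he _ ⟨{true}, trivial, rfl⟩

lemma measurableSet_conn_of_snd_le {m : MeasurableSpace Config} {u v : Vtx} (h : v.2 ≤ u.2) :
    MeasurableSet[m] {ω | Conn ω u v} := by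
  simp_rw [conn_iff_eq_of_snd_le h]
  exact MeasurableSet.const _

lemma measurableSet_conn (u v : Vtx) :
    MeasurableSet[edgeSigma {e | u.2 ≤ e.1.2 ∧ e.1.2 < v.2}] {ω | Conn ω u v} := by
  obtain ⟨k, hk⟩ : ∃ k : ℕ, v.2 ≤ u.2 + k := ⟨(v.2 - u.2).toNat, by omega⟩
  induction k generalizing u with
  | zero => exact measurableSet_conn_of_snd_le (by simpa using hk)
  | succ k ih =>
    by_cases huv : v.2 ≤ u.2
    · exact measurableSet_conn_of_snd_le huv
    have hdecomp : {ω | Conn ω u v} = {_ω | u = v} ∪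
        ⋃ b : Bool, {ω | ω (u, b) = true} ∩ {ω | Conn ω (tip (u, b)) v} := by
      ext ω
      simp only [Conn, Step, ReflTransGen.cases_head_iff (a := u)]
      simp
    rw [hdecomp]
    refine (MeasurableSet.const _).union (.iUnion fun b => .inter ?_ ?_)
    · exact measurableSet_edgeSigma_open ⟨le_rfl, show u.2 < v.2 by omega⟩
    · have htip : (tip (u, b)).2 = u.2 + 1 := tip_snd (u, b)
      refine edgeSigma_mono ?_ _ (ih _ (by omega))
      rintro e ⟨he₁, he₂⟩
      exact ⟨by omega, he₂⟩

lemma measurableSet_connToLine (n : ℤ) : MeasurableSet {ω | ConnToLine ω n} := by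
  simp only [ConnToLine, Set.ofPred_exists]
  exact .iUnion fun x => edgeSigma_le _ _ (measurableSet_conn _ _)

lemma measurable_precomp (σ : Edge → Edge) : Measurable fun ω : Config => ω ∘ σ := by
  fun_prop

namespace IsBernoulli

variable {μ : Measure Config} {p : ℝ}

lemma map_comp_equiv (hB : IsBernoulli μ p) (σ : Edge ≃ Edge) :
    μ.map (fun ω => ω ∘ σ) = μ := by
  have := hB.1
  refine ext_of_pointCylinders fun s f => ?_
  rw [Measure.map_apply (measurable_precomp σ) (measurableSet_pointCylinder s f)]
  have hpre : (fun ω : Config => ω ∘ σ) ⁻¹' {ω | ∀ e ∈ s, ω e = f e}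
      = {ω | ∀ e ∈ s.map σ.toEmbedding, ω e = f (σ.symm e)} := by
    ext ω
    simp only [Set.mem_preimage, Set.mem_ofPred_eq, Finset.forall_mem_map, Function.comp_apply,
      Equiv.coe_toEmbedding, Equiv.symm_apply_apply]
  rw [hpre, ← ENNReal.toReal_eq_toReal_iff' (measure_ne_top _ _) (measure_ne_top _ _),
    hB.2.2, hB.2.2, Finset.prod_map]
  simp

lemma measure_preimage_comp_equiv (hB : IsBernoulli μ p) (σ : Edge ≃ Edge) {A : Set Config}
    (hA : MeasurableSet A) : μ ((fun ω => ω ∘ σ) ⁻¹' A) = μ A := by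
  rw [← Measure.map_apply (measurable_precomp σ) hA, hB.map_comp_equiv]

lemma iIndepFun (hB : IsBernoulli μ p) : iIndepFun (fun e (ω : Config) => ω e) μ := by
  have := hB.1
  have (e : Edge) : IsProbabilityMeasure (μ.map fun ω : Config => ω e) :=
    Measure.isProbabilityMeasure_map (measurable_pi_apply e).aemeasurable
  rw [iIndepFun_iff_map_fun_eq_infinitePi_map measurable_pi_apply, Measure.map_id']
  refine ext_of_pointCylinders fun s f => ?_
  have hcyl : {ω : Config | ∀ e ∈ s, ω e = f e} = Set.pi s fun e => {f e} := rfl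
  rw [hcyl, Measure.infinitePi_pi _ fun e _ => measurableSet_singleton (f e),
    ← ENNReal.toReal_eq_toReal_iff' (measure_ne_top _ _)
      (ENNReal.prod_ne_top fun _ _ => measure_ne_top _ _), ← hcyl, hB.2.2, ENNReal.toReal_prod]
  refine Finset.prod_congr rfl fun e _ => ?_
  have hsingle : (fun ω : Config => ω e) ⁻¹' {f e}
      = {ω | ∀ e' ∈ ({e} : Finset Edge), ω e' = f e'} := by
    ext; simp
  rw [Measure.map_apply (measurable_pi_apply e) (measurableSet_singleton _), hsingle, hB.2.2,
    Finset.prod_singleton]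

lemma indep_edgeSigma (hB : IsBernoulli μ p) {E F : Set Edge} (h : Disjoint E F) :
    Indep (edgeSigma E) (edgeSigma F) μ :=
  indep_iSup_of_disjoint (fun e => (measurable_pi_apply e).comap_le)
    ((iIndepFun_iff_iIndep _ _ _).1 hB.iIndepFun) h

lemma measure_conn_from (hB : IsBernoulli μ p) (u : Vtx) (m : ℤ) :
    μ {ω | ∃ z, Conn ω u (z, u.2 + m)} = μ {ω | ConnToLine ω m} := by
  rw [← hB.measure_preimage_comp_equiv (translate u) (measurableSet_connToLine m)]
  obtain ⟨a, b⟩ := u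
  congr 1
  ext ω
  simp only [Set.mem_ofPred_eq, Set.mem_preimage, ConnToLine, conn_comp_translate,
    Prod.mk_add_mk, zero_add]
  constructor
  · rintro ⟨z, h⟩
    exact ⟨z - a, by rwa [sub_add_cancel, add_comm m]⟩
  · rintro ⟨x, h⟩
    exact ⟨x + a, by rwa [add_comm b]⟩

lemma measure_conn_to (hB : IsBernoulli μ p) (v : Vtx) :
    μ {ω | ∃ y, Conn ω (y, 0) v} = μ {ω | ConnToLine ω v.2} := by
  rw [← hB.measure_preimage_comp_equiv (reflect v) (measurableSet_connToLine v.2)]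
  obtain ⟨a, b⟩ := v
  congr 1
  ext ω
  simp only [Set.mem_ofPred_eq, Set.mem_preimage, ConnToLine, conn_comp_reflect,
    Prod.mk_sub_mk, sub_zero, sub_self]
  constructor
  · rintro ⟨y, h⟩
    exact ⟨a - y, by rwa [sub_sub_cancel]⟩
  · rintro ⟨x, h⟩
    exact ⟨a - x, h⟩

lemma measureReal_conn_through (hB : IsBernoulli μ p) (x n : ℤ) :
    μ.real ({ω | ∃ y, Conn ω (y, 0) (x, n)} ∩ {ω | ∃ z, Conn ω (x, n) (z, n + n)})
      = μ.real {ω | ConnToLine ω n} ^ 2 := by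
  have hdisj : Disjoint {e : Edge | e.1.2 < n} {e | n ≤ e.1.2} :=
    Set.disjoint_left.2 fun e h₁ h₂ => by simp only [Set.mem_ofPred_eq] at h₁ h₂; omega
  have hlow : MeasurableSet[edgeSigma {e | e.1.2 < n}] {ω | ∃ y, Conn ω (y, 0) (x, n)} := by
    simp only [Set.ofPred_exists]
    exact .iUnion fun y => edgeSigma_mono (fun e he => he.2) _ (measurableSet_conn _ _)
  have hhigh : MeasurableSet[edgeSigma {e | n ≤ e.1.2}] {ω | ∃ z, Conn ω (x, n) (z, n + n)} := by
    simp only [Set.ofPred_exists]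
    exact .iUnion fun z => edgeSigma_mono (fun e he => he.1) _ (measurableSet_conn _ _)
  rw [measureReal_def, (Indep_iff _ _ μ).1 (hB.indep_edgeSigma hdisj) _ _ hlow hhigh,
    ENNReal.toReal_mul, hB.measure_conn_to, hB.measure_conn_from (x, n), measureReal_def, sq]

lemma V_two_mul_le (hB : IsBernoulli μ p) (w n : ℕ) :
    V μ w (2 * n) ≤ (w + 1) * μ.real {ω | ConnToLine ω n} ^ 2 := by
  have := hB.1
  calc V μ w (2 * n) = μ.real {ω | CrossedVert ω 0 w 0 (n + n)} := by
        rw [V, measureReal_def]; push_cast; rw [two_mul]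
    _ ≤ μ.real (⋃ x ∈ Finset.Icc (0 : ℤ) w,
          {ω | ∃ y, Conn ω (y, 0) (x, n)} ∩ {ω | ∃ z, Conn ω (x, n) (z, n + n)}) := by
        refine measureReal_mono (fun ω hω => ?_) (measure_ne_top _ _)
        obtain ⟨x, hx, hlow, hhigh⟩ := CrossedVert.exists_pivot (by positivity) hω
        exact Set.mem_biUnion hx ⟨hlow, hhigh⟩
    _ ≤ ∑ x ∈ Finset.Icc (0 : ℤ) w, μ.real ({ω | ∃ y, Conn ω (y, 0) (x, n)} ∩
          {ω | ∃ z, Conn ω (x, n) (z, n + n)}) := measureReal_biUnion_finset_le _ _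
    _ = (w + 1) * μ.real {ω | ConnToLine ω n} ^ 2 := by
        rw [Finset.sum_congr rfl fun x _ => hB.measureReal_conn_through x n, Finset.sum_const,
          Int.card_Icc, nsmul_eq_mul, sub_zero, Int.toNat_natCast_add_one]
        push_cast
        rfl

end IsBernoulli

/-- There is a constant `c > 0` (depending only on `c₀`)
such that for every `n ≥ 1` and every integer `w ≥ 1` with `V(w, 2n) ≥ c₀`,
one has `P(0 → ℓ_n) ≥ c / √w`. -/
theorem one_arm_lower_bound (μ : Measure Config) (p : ℝ) (hB : IsBernoulli μ p)
    (c₀ : ℝ) (hc₀ : 0 < c₀) :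
    ∃ c : ℝ, 0 < c ∧ ∀ n w : ℕ, 1 ≤ n → 1 ≤ w →
      c₀ ≤ V μ w (2 * n) →
      c / Real.sqrt w ≤ (μ {ω | ConnToLine ω (n : ℤ)}).toReal := by
  refine ⟨Real.sqrt (c₀ / 2), by positivity, fun n w _ hw hV => ?_⟩
  rw [← measureReal_def]
  set P := μ.real {ω | ConnToLine ω n}
  have hw' : (w : ℝ) + 1 ≤ 2 * w := by
    have : (1 : ℝ) ≤ w := by exact_mod_cast hw
    linarith
  have hP : c₀ / 2 / w ≤ P ^ 2 := by
    rw [div_div, div_le_iff₀ (by positivity)]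
    nlinarith [hB.V_two_mul_le w n, sq_nonneg P]
  calc Real.sqrt (c₀ / 2) / Real.sqrt w = Real.sqrt (c₀ / 2 / w) :=
        (Real.sqrt_div' _ w.cast_nonneg).symm
    _ ≤ Real.sqrt (P ^ 2) := Real.sqrt_le_sqrt hP
    _ = P := Real.sqrt_sq measureReal_nonneg

end OrientedPerc
end
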